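/- arXiv:1611.04494 — 8 statements merged into one kernel-verified Lean document; each statement's English description precedes it below -/
import Mathlib

section
/- Suppose U₀ and U₁ are utility functions satisfying the single-period inverse investment problem, and suppose in addition that for every x > 0 the supremum is attained at some π*(x) with −x/(u−1) < π*(x) < x/(1−d), where the map x ↦ π*(x) is differentiable on (0,∞). Then the inverse marginals I₀ = (U₀′)^{−1} and I₁ = (U₁′)^{−1} satisfy the functional equation I₁(a·y) + b·I₁(y) = (1+b)·I₀(c·y) for all y > 0. -/
open Set Filter

noncomputable section

/-- A utility function: `C²` on `(0,∞)`, strictly increasing and strictly concave there,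
satisfying the Inada conditions. -/
def IsUtility (U : ℝ → ℝ) : Prop :=
  ContDiffOn ℝ 2 U (Set.Ioi 0) ∧
  (∀ x > 0, 0 < deriv U x) ∧
  (∀ x > 0, deriv (deriv U) x < 0) ∧
  Tendsto (deriv U) (nhdsWithin 0 (Set.Ioi 0)) atTop ∧
  Tendsto (deriv U) atTop (nhds 0)

/-- An inverse marginal function: positive, `C¹` on `(0,∞)`, strictly decreasing derivative,
with `I(∞)=0` and `I(0+)=∞`. -/
def IsInvMarginal (I : ℝ → ℝ) : Prop :=
  (∀ y > 0, 0 < I y) ∧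
  ContDiffOn ℝ 1 I (Set.Ioi 0) ∧
  (∀ y > 0, deriv I y < 0) ∧
  Tendsto I atTop (nhds 0) ∧
  Tendsto I (nhdsWithin 0 (Set.Ioi 0)) atTop

/-- `I` is the inverse of the marginal `U'` on the positive reals: `I = (U')⁻¹`. -/
def InvMarginalOf (I U : ℝ → ℝ) : Prop :=
  (∀ x > 0, I (deriv U x) = x) ∧ (∀ y > 0, 0 < I y ∧ deriv U (I y) = y)

/-- `J` is the inverse function of `I` on the positive reals. -/
def IsInverseOf (J I : ℝ → ℝ) : Prop :=
  (∀ y > 0, J (I y) = y) ∧ (∀ x > 0, 0 < J x ∧ I (J x) = x)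

/-- The single-period inverse investment problem:
`U₀(x) = sup {p·U₁(x+π(u−1)) + (1−p)·U₁(x+π(d−1)) : −x/(u−1) ≤ π ≤ x/(1−d)}` for all `x > 0`. -/
def SPIIP (u d p : ℝ) (U₀ U₁ : ℝ → ℝ) : Prop :=
  ∀ x > 0, U₀ x =
    sSup ((fun pi => p * U₁ (x + pi * (u - 1)) + (1 - p) * U₁ (x + pi * (d - 1))) ''
      Set.Icc (-(x / (u - 1))) (x / (1 - d)))

/-!
Fix `x > 0` and write `x_u = x + πs x (u-1)`, `x_d = x + πs x (d-1)` for the terminal wealths.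
Since the supremum is attained at the interior point `πs x`, the first-order condition
`p (u-1) U₁'(x_u) = (1-p) (1-d) U₁'(x_d)` holds, i.e. `U₁'(x_u) = a U₁'(x_d)`, where `q` is the
risk-neutral probability of the up move. Differentiating `U₀(x) = p U₁(x_u) + (1-p) U₁(x_d)` in `x`,
the terms carrying `πs'(x)` cancel by the same condition (envelope theorem), so
`U₀'(x) = p U₁'(x_u) + (1-p) U₁'(x_d) = c U₁'(x_d)`. With `y = U₁'(x_d)` this reads
`I₁(a y) = x_u`, `I₁(y) = x_d`, `I₀(c y) = x`, and `x_u + b x_d = (1+b) x`. By the Inada conditions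
`U₀'` maps `(0,∞)` onto itself, so every `y > 0` arises this way.
-/

open Topology

namespace IsUtility

variable {U : ℝ → ℝ}

theorem differentiableAt (hU : IsUtility U) {x : ℝ} (hx : 0 < x) : DifferentiableAt ℝ U x :=
  (hU.1.differentiableOn two_ne_zero).differentiableAt (Ioi_mem_nhds hx)

theorem strictMonoOn (hU : IsUtility U) : StrictMonoOn U (Ioi 0) :=
  strictMonoOn_of_deriv_pos (convex_Ioi 0) hU.1.continuousOn
    (by rw [interior_Ioi]; exact hU.2.1)

theorem exists_deriv_eq (hU : IsUtility U) {t : ℝ} (ht : 0 < t) : ∃ x > 0, deriv U x = t := by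
  obtain ⟨x₁, ht₁, hx₁⟩ :=
    ((hU.2.2.2.1.eventually (eventually_gt_atTop t)).and self_mem_nhdsWithin).exists
  obtain ⟨x₂, ht₂, hx₁₂⟩ :=
    ((hU.2.2.2.2.eventually (Iio_mem_nhds ht)).and (eventually_ge_atTop x₁)).exists
  have hcont : ContinuousOn (deriv U) (Icc x₁ x₂) :=
    (hU.1.continuousOn_deriv_of_isOpen isOpen_Ioi one_le_two).mono
      fun z hz => lt_of_lt_of_le hx₁ hz.1
  obtain ⟨x, hx, hxt⟩ := intermediate_value_Icc' hx₁₂ hcont ⟨ht₂.le, ht₁.le⟩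
  exact ⟨x, lt_of_lt_of_le hx₁ hx.1, hxt⟩

end IsUtility

theorem isLocalMax_of_csSup_image_eq {α β : Type*} [TopologicalSpace α]
    [ConditionallyCompleteLattice β] {f : α → β} {s : Set α} {a : α} (hs : s ∈ 𝓝 a)
    (hbdd : BddAbove (f '' s)) (hsup : sSup (f '' s) = f a) : IsLocalMax f a :=
  IsMaxOn.isLocalMax (fun _ hz => hsup ▸ le_csSup hbdd (mem_image_of_mem f hz)) hs

def expectedUtility (u d p : ℝ) (U : ℝ → ℝ) (x π : ℝ) : ℝ :=
  p * U (x + π * (u - 1)) + (1 - p) * U (x + π * (d - 1))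

section Binomial

variable {u d p : ℝ} {U : ℝ → ℝ}

theorem up_wealth_pos (hu : 1 < u) {x π : ℝ} (h : -(x / (u - 1)) < π) :
    0 < x + π * (u - 1) := by
  rw [← neg_div, div_lt_iff₀ (by linarith)] at h
  linarith

theorem down_wealth_pos (hd : d < 1) {x π : ℝ} (h : π < x / (1 - d)) :
    0 < x + π * (d - 1) := by
  rw [lt_div_iff₀ (by linarith)] at h
  linarith

theorem bddAbove_expectedUtility_image (hU : MonotoneOn U (Ioi 0)) (hu : 1 < u) (hd : d < 1)
    (hp₀ : 0 ≤ p) (hp₁ : p ≤ 1) (x : ℝ) :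
    BddAbove (expectedUtility u d p U x '' Icc (-(x / (u - 1))) (x / (1 - d))) := by
  set l := -(x / (u - 1))
  set r := x / (1 - d)
  -- at an endpoint one terminal wealth vanishes, where nothing is known about `U`
  have hsub : Icc l r ⊆ {l, r} ∪ Ioo l r := sdiff_subset_iff.mp Icc_sdiff_both.subset
  refine BddAbove.mono (image_mono hsub) ?_
  rw [image_union]
  refine bddAbove_union.2 ⟨(((finite_singleton r).insert l).image _).bddAbove, ?_⟩
  refine ⟨p * U (x + r * (u - 1)) + (1 - p) * U (x + l * (d - 1)), ?_⟩
  rintro _ ⟨π, ⟨hl, hr⟩, rfl⟩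
  have hup : x + π * (u - 1) ≤ x + r * (u - 1) := by gcongr
  have hdown : x + π * (d - 1) ≤ x + l * (d - 1) := by
    linarith [mul_le_mul_of_nonpos_right hl.le (by linarith : d - 1 ≤ 0)]
  have hwu := up_wealth_pos hu hl
  have hwd := down_wealth_pos hd hr
  have := mul_le_mul_of_nonneg_left (hU hwu (lt_of_lt_of_le hwu hup) hup) hp₀
  have := mul_le_mul_of_nonneg_left (hU hwd (lt_of_lt_of_le hwd hdown) hdown) (sub_nonneg.2 hp₁)
  unfold expectedUtility
  linarith

theorem hasDerivAt_expectedUtility_comp {x π : ℝ → ℝ} {x' π' t : ℝ} (hx : HasDerivAt x x' t)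
    (hπ : HasDerivAt π π' t) (hUu : DifferentiableAt ℝ U (x t + π t * (u - 1)))
    (hUd : DifferentiableAt ℝ U (x t + π t * (d - 1))) :
    HasDerivAt (fun s => expectedUtility u d p U (x s) (π s))
      (p * (deriv U (x t + π t * (u - 1)) * (x' + π' * (u - 1))) +
        (1 - p) * (deriv U (x t + π t * (d - 1)) * (x' + π' * (d - 1)))) t :=
  ((hUu.hasDerivAt.comp t (hx.add (hπ.mul_const _))).const_mul p).add
    ((hUd.hasDerivAt.comp t (hx.add (hπ.mul_const _))).const_mul (1 - p))

theorem IsLocalMax.expectedUtility_foc {x π : ℝ}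
    (hmax : IsLocalMax (expectedUtility u d p U x) π)
    (hUu : DifferentiableAt ℝ U (x + π * (u - 1)))
    (hUd : DifferentiableAt ℝ U (x + π * (d - 1))) :
    p * deriv U (x + π * (u - 1)) * (u - 1) +
      (1 - p) * deriv U (x + π * (d - 1)) * (d - 1) = 0 := by
  have h := hmax.hasDerivAt_eq_zero
    (hasDerivAt_expectedUtility_comp (hasDerivAt_const π x) (hasDerivAt_id' π) hUu hUd)
  linear_combination h

/-- Envelope theorem: by the first-order condition the derivative of the position drops out. -/
theorem deriv_eq_of_eventuallyEq_expectedUtility {V π : ℝ → ℝ} {x : ℝ}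
    (hV : V =ᶠ[𝓝 x] fun z => expectedUtility u d p U z (π z)) (hπ : DifferentiableAt ℝ π x)
    (hUu : DifferentiableAt ℝ U (x + π x * (u - 1)))
    (hUd : DifferentiableAt ℝ U (x + π x * (d - 1)))
    (hfoc : p * deriv U (x + π x * (u - 1)) * (u - 1) +
      (1 - p) * deriv U (x + π x * (d - 1)) * (d - 1) = 0) :
    deriv V x = p * deriv U (x + π x * (u - 1)) + (1 - p) * deriv U (x + π x * (d - 1)) := by
  rw [hV.deriv_eq,
    (hasDerivAt_expectedUtility_comp (hasDerivAt_id' x) hπ.hasDerivAt hUu hUd).deriv]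
  linear_combination deriv π x * hfoc

end Binomial

section RiskNeutral

variable {u d p q : ℝ}

theorem riskNeutral_lt_one (hu : 1 < u) (hd : d < 1) (hq : q = (1 - d) / (u - d)) : q < 1 := by
  rw [hq, div_lt_one (by linarith)]; linarith

theorem one_sub_riskNeutral (hu : 1 < u) (hd : d < 1) (hq : q = (1 - d) / (u - d)) :
    1 - q = (u - 1) / (u - d) := by
  have : u - d ≠ 0 := by linarith
  rw [hq]
  field_simp
  ring

theorem marginal_up_eq_of_foc (hu : 1 < u) (hd : d < 1) (hp : 0 < p)
    (hq : q = (1 - d) / (u - d)) {A B : ℝ}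
    (hfoc : p * A * (u - 1) + (1 - p) * B * (d - 1) = 0) :
    A = (1 - p) * q / (p * (1 - q)) * B := by
  rw [one_sub_riskNeutral hu hd hq, hq]
  have : u - d ≠ 0 := by linarith
  have : u - 1 ≠ 0 := by linarith
  field_simp
  linear_combination hfoc

theorem expected_marginal_eq_of_foc (hu : 1 < u) (hd : d < 1)
    (hq : q = (1 - d) / (u - d)) {A B : ℝ}
    (hfoc : p * A * (u - 1) + (1 - p) * B * (d - 1) = 0) :
    p * A + (1 - p) * B = (1 - p) / (1 - q) * B := by
  rw [one_sub_riskNeutral hu hd hq]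
  have : u - d ≠ 0 := by linarith
  have : u - 1 ≠ 0 := by linarith
  field_simp
  linear_combination hfoc

theorem up_wealth_add_mul_down_wealth (hu : 1 < u) (hd : d < 1) (hq : q = (1 - d) / (u - d))
    (x π : ℝ) :
    x + π * (u - 1) + (1 - q) / q * (x + π * (d - 1)) = (1 + (1 - q) / q) * x := by
  subst hq
  have : u - d ≠ 0 := by linarith
  have : 1 - d ≠ 0 := by linarith
  field_simp
  ring

end RiskNeutral

theorem marginals_at_optimum {u d p q : ℝ} {U₀ U₁ πs : ℝ → ℝ} (hu : 1 < u) (hd : d < 1)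
    (hp₀ : 0 < p) (hp₁ : p < 1) (hq : q = (1 - d) / (u - d)) (hU₁ : IsUtility U₁)
    (hSP : SPIIP u d p U₀ U₁) (hπdiff : DifferentiableOn ℝ πs (Ioi 0))
    (hπint : ∀ x > 0, -(x / (u - 1)) < πs x ∧ πs x < x / (1 - d))
    (hπatt : ∀ x > 0, U₀ x = expectedUtility u d p U₁ x (πs x)) {x : ℝ} (hx : 0 < x) :
    deriv U₁ (x + πs x * (u - 1)) =
        (1 - p) * q / (p * (1 - q)) * deriv U₁ (x + πs x * (d - 1)) ∧
      deriv U₀ x = (1 - p) / (1 - q) * deriv U₁ (x + πs x * (d - 1)) := by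
  obtain ⟨hl, hr⟩ := hπint x hx
  have hUu := hU₁.differentiableAt (up_wealth_pos hu hl)
  have hUd := hU₁.differentiableAt (down_wealth_pos hd hr)
  have hmax : IsLocalMax (expectedUtility u d p U₁ x) (πs x) :=
    isLocalMax_of_csSup_image_eq (Icc_mem_nhds hl hr)
      (bddAbove_expectedUtility_image hU₁.strictMonoOn.monotoneOn hu hd hp₀.le hp₁.le x)
      ((hSP x hx).symm.trans (hπatt x hx))
  have hfoc := hmax.expectedUtility_foc hUu hUd
  have hV : U₀ =ᶠ[𝓝 x] fun z => expectedUtility u d p U₁ z (πs z) :=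
    eventually_of_mem (Ioi_mem_nhds hx) hπatt
  refine ⟨marginal_up_eq_of_foc hu hd hp₀ hq hfoc, ?_⟩
  rw [deriv_eq_of_eventuallyEq_expectedUtility hV
    (hπdiff.differentiableAt (Ioi_mem_nhds hx)) hUu hUd hfoc]
  exact expected_marginal_eq_of_foc hu hd hq hfoc

theorem stmt0_general
    (u d p q a b c : ℝ)
    (hu : 1 < u) (hd1 : d < 1) (hp0 : 0 < p) (hp1 : p < 1)
    (hq : q = (1 - d) / (u - d)) (ha : a = ((1 - p) * q) / (p * (1 - q)))
    (hb : b = (1 - q) / q) (hc : c = (1 - p) / (1 - q))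
    (U₀ U₁ I₀ I₁ : ℝ → ℝ)
    (hU₀ : IsUtility U₀) (hU₁ : IsUtility U₁)
    (hI₀ : InvMarginalOf I₀ U₀) (hI₁ : InvMarginalOf I₁ U₁)
    (hSP : SPIIP u d p U₀ U₁)
    (πs : ℝ → ℝ)
    (hπdiff : DifferentiableOn ℝ πs (Set.Ioi 0))
    (hπint : ∀ x > 0, -(x / (u - 1)) < πs x ∧ πs x < x / (1 - d))
    (hπatt : ∀ x > 0,
      U₀ x = p * U₁ (x + πs x * (u - 1)) + (1 - p) * U₁ (x + πs x * (d - 1))) :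
    ∀ y > 0, I₁ (a * y) + b * I₁ y = (1 + b) * I₀ (c * y) := by
  intro y hy
  have hc₀ : 0 < c := by
    rw [hc]; exact div_pos (by linarith) (by linarith [riskNeutral_lt_one hu hd1 hq])
  obtain ⟨x, hx, hU₀x⟩ := hU₀.exists_deriv_eq (mul_pos hc₀ hy)
  obtain ⟨hl, hr⟩ := hπint x hx
  obtain ⟨hup, hdown⟩ :=
    marginals_at_optimum hu hd1 hp0 hp1 hq hU₁ hSP hπdiff hπint hπatt hx
  rw [← ha] at hup
  rw [← hc] at hdown
  have hy' : deriv U₁ (x + πs x * (d - 1)) = y :=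
    mul_left_cancel₀ hc₀.ne' (hdown.symm.trans hU₀x)
  rw [← hU₀x, hI₀.1 x hx, ← hy', ← hup, hI₁.1 _ (up_wealth_pos hu hl),
    hI₁.1 _ (down_wealth_pos hd1 hr), hb]
  exact up_wealth_add_mul_down_wealth hu hd1 hq x (πs x)

/-- If utility functions `U₀, U₁` satisfy the single-period inverse investment
problem, with the supremum attained at an interior, differentiable optimizer `πs`, then the
inverse marginals satisfy `I₁(a·y) + b·I₁(y) = (1+b)·I₀(c·y)` for all `y > 0`. -/
theorem stmt0
    (u d p q a b c : ℝ)
    (hu : 1 < u) (hd0 : 0 < d) (hd1 : d < 1) (hp0 : 0 < p) (hp1 : p < 1)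
    (hq : q = (1 - d) / (u - d)) (ha : a = ((1 - p) * q) / (p * (1 - q)))
    (hb : b = (1 - q) / q) (hc : c = (1 - p) / (1 - q))
    (U₀ U₁ I₀ I₁ : ℝ → ℝ)
    (hU₀ : IsUtility U₀) (hU₁ : IsUtility U₁)
    (hI₀ : InvMarginalOf I₀ U₀) (hI₁ : InvMarginalOf I₁ U₁)
    (hSP : SPIIP u d p U₀ U₁)
    (πs : ℝ → ℝ)
    (hπdiff : DifferentiableOn ℝ πs (Set.Ioi 0))
    (hπint : ∀ x > 0, -(x / (u - 1)) < πs x ∧ πs x < x / (1 - d))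
    (hπatt : ∀ x > 0,
      U₀ x = p * U₁ (x + πs x * (u - 1)) + (1 - p) * U₁ (x + πs x * (d - 1))) :
    ∀ y > 0, I₁ (a * y) + b * I₁ y = (1 + b) * I₀ (c * y) :=
  stmt0_general u d p q a b c hu hd1 hp0 hp1 hq ha hb hc U₀ U₁ I₀ I₁ hU₀ hU₁ hI₀ hI₁ hSP πs hπdiff
    hπint hπatt
end
end

section
/- Let U₀ be a utility function with inverse marginal I₀ = (U₀′)^{−1}, and let I₁ be an inverse marginal function satisfying the functional equation I₁(a·y) + b·I₁(y) = (1+b)·I₀(c·y) for all y > 0. Define, for x > 0, U₁(x) = U₀(1) + p·∫_{I₁((q/p)·U₀′(1))}^{x} I₁^{−1}(ξ) dξ + (1−p)·∫_{I₁(((1−q)/(1−p))·U₀′(1))}^{x} I₁^{−1}(ξ) dξ, where I₁^{−1} is the inverse function of I₁. Then U₁ is a utility function and U₁′(x) = I₁^{−1}(x) for all x > 0; in particular, the inverse marginal of U₁ is I₁. -/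
/-!
Both integrals have the integrand `J₁ = I₁⁻¹` and the weights `p`, `1 - p` sum to one, so
`U₁' = J₁` by the fundamental theorem of calculus. The rest concerns the inverse `J₁` of the
strictly decreasing bijection `I₁` of `(0, ∞)`: it is strictly decreasing onto an interval, hence
continuous, and by the inverse function theorem `J₁' = 1 / I₁'(J₁) < 0` is continuous, which gives
`U₁ ∈ C²` with `U₁'' < 0`. The Inada conditions for `U₁' = J₁` are the bijectivity of `I₁` read at
the two ends of `(0, ∞)`.
-/

open Set Filter

noncomputable section

open Topology

namespace IsInvMarginal

variable {I : ℝ → ℝ}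

theorem strictAntiOn (hI : IsInvMarginal I) : StrictAntiOn I (Ioi 0) :=
  strictAntiOn_of_deriv_neg (convex_Ioi 0) hI.2.1.continuousOn
    fun x hx => hI.2.2.1 x (by rwa [interior_Ioi] at hx)

theorem hasDerivAt (hI : IsInvMarginal I) {y : ℝ} (hy : 0 < y) : HasDerivAt I (deriv I y) y :=
  ((hI.2.1.differentiableOn one_ne_zero).differentiableAt (Ioi_mem_nhds hy)).hasDerivAt

end IsInvMarginal

namespace IsInverseOf

variable {I J : ℝ → ℝ}

theorem lt_apply_iff (hJ : IsInverseOf J I) (hI : StrictAntiOn I (Ioi 0)) {x z : ℝ}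
    (hx : 0 < x) (hz : 0 < z) : z < J x ↔ x < I z := by
  conv_rhs => rw [← (hJ.2 x hx).2]
  exact (hI.lt_iff_gt (hJ.2 x hx).1 hz).symm

theorem apply_lt_iff (hJ : IsInverseOf J I) (hI : StrictAntiOn I (Ioi 0)) {x z : ℝ}
    (hx : 0 < x) (hz : 0 < z) : J x < z ↔ I z < x := by
  conv_rhs => rw [← (hJ.2 x hx).2]
  exact (hI.lt_iff_gt hz (hJ.2 x hx).1).symm

theorem strictAntiOn (hJ : IsInverseOf J I) (hI : StrictAntiOn I (Ioi 0)) :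
    StrictAntiOn J (Ioi 0) := fun x hx x' hx' hxx' => by
  rw [hJ.apply_lt_iff hI hx' (hJ.2 x hx).1, (hJ.2 x hx).2]
  exact hxx'

theorem image_Ioi (hJ : IsInverseOf J I) (hI : ∀ y > 0, 0 < I y) : J '' Ioi 0 = Ioi 0 :=
  Subset.antisymm (image_subset_iff.2 fun x hx => (hJ.2 x hx).1)
    fun y hy => ⟨I y, hI y hy, hJ.1 y hy⟩

theorem continuousOn (hJ : IsInverseOf J I) (hI : IsInvMarginal I) : ContinuousOn J (Ioi 0) :=
  fun x hx => ContinuousAt.continuousWithinAt <|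
    StrictMonoOn.continuousAt_of_image_mem_nhds (β := ℝᵒᵈ)
      (hJ.strictAntiOn hI.strictAntiOn).dual_right (Ioi_mem_nhds hx) (by
        change J '' Ioi 0 ∈ 𝓝 (J x)
        rw [hJ.image_Ioi hI.1]
        exact Ioi_mem_nhds (hJ.2 x hx).1)

theorem hasDerivAt (hJ : IsInverseOf J I) (hI : IsInvMarginal I) {x : ℝ} (hx : 0 < x) :
    HasDerivAt J (deriv I (J x))⁻¹ x :=
  (hI.hasDerivAt (hJ.2 x hx).1).of_local_left_inverse
    ((hJ.continuousOn hI).continuousAt (Ioi_mem_nhds hx)) (hI.2.2.1 _ (hJ.2 x hx).1).ne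
    (eventually_of_mem (Ioi_mem_nhds hx) fun z hz => (hJ.2 z hz).2)

theorem contDiffOn (hJ : IsInverseOf J I) (hI : IsInvMarginal I) : ContDiffOn ℝ 1 J (Ioi 0) := by
  rw [show (1 : WithTop ℕ∞) = 0 + 1 from rfl, contDiffOn_succ_iff_deriv_of_isOpen isOpen_Ioi]
  refine ⟨fun x hx => (hJ.hasDerivAt hI hx).differentiableAt.differentiableWithinAt,
    by simp, contDiffOn_zero.2 ?_⟩
  refine ContinuousOn.congr (f := fun x => (deriv I (J x))⁻¹) ?_
    fun x hx => (hJ.hasDerivAt hI hx).deriv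
  exact ((hI.2.1.continuousOn_deriv_of_isOpen isOpen_Ioi le_rfl).comp (hJ.continuousOn hI)
    fun x hx => (hJ.2 x hx).1).inv₀ fun x hx => (hI.2.2.1 _ (hJ.2 x hx).1).ne

theorem tendsto_nhdsGT_zero (hJ : IsInverseOf J I) (hI : IsInvMarginal I) :
    Tendsto J (𝓝[>] 0) atTop := by
  refine tendsto_atTop.2 fun M => ?_
  have hM : (0 : ℝ) < max M 1 := lt_max_of_lt_right one_pos
  filter_upwards [Ioo_mem_nhdsGT (hI.1 _ hM)] with x hx
  exact (le_max_left M 1).trans ((hJ.lt_apply_iff hI.strictAntiOn hx.1 hM).2 hx.2).le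

theorem tendsto_atTop (hJ : IsInverseOf J I) (hI : IsInvMarginal I) :
    Tendsto J atTop (𝓝 0) := by
  refine tendsto_order.2 ⟨fun l hl => ?_, fun v hv => ?_⟩
  · filter_upwards [eventually_gt_atTop 0] with x hx
    exact hl.trans (hJ.2 x hx).1
  · filter_upwards [eventually_gt_atTop (max 0 (I v))] with x hx
    have hx0 : 0 < x := (le_max_left _ _).trans_lt hx
    exact (hJ.apply_lt_iff hI.strictAntiOn hx0 hv).2 ((le_max_right _ _).trans_lt hx)

theorem isUtility_of_hasDerivAt (hJ : IsInverseOf J I) (hI : IsInvMarginal I) {U : ℝ → ℝ}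
    (hU : ∀ x > 0, HasDerivAt U (J x) x) : IsUtility U ∧ InvMarginalOf I U := by
  have hU' : ∀ x > 0, deriv U x = J x := fun x hx => (hU x hx).deriv
  have hU'' : ∀ x > 0, deriv (deriv U) x = deriv J x := fun x hx =>
    EventuallyEq.deriv_eq (eventually_of_mem (Ioi_mem_nhds hx) hU')
  have hU'_ev : deriv U =ᶠ[𝓝[>] 0] J := eventually_of_mem self_mem_nhdsWithin hU'
  refine ⟨⟨?_, fun x hx => ?_, fun x hx => ?_, (hJ.tendsto_nhdsGT_zero hI).congr' hU'_ev.symm,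
    (hJ.tendsto_atTop hI).congr' (EventuallyEq.symm (eventually_of_mem (Ioi_mem_atTop 0) hU'))⟩,
    fun x hx => ?_, fun y hy => ⟨hI.1 y hy, ?_⟩⟩
  · rw [show (2 : WithTop ℕ∞) = 1 + 1 from rfl, contDiffOn_succ_iff_deriv_of_isOpen isOpen_Ioi]
    exact ⟨fun x hx => (hU x hx).differentiableAt.differentiableWithinAt, by simp,
      (hJ.contDiffOn hI).congr hU'⟩
  · exact hU' x hx ▸ (hJ.2 x hx).1
  · rw [hU'' x hx, (hJ.hasDerivAt hI hx).deriv]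
    exact inv_lt_zero.2 (hI.2.2.1 _ (hJ.2 x hx).1)
  · rw [hU' x hx, (hJ.2 x hx).2]
  · rw [hU' _ (hI.1 y hy), hJ.1 y hy]

end IsInverseOf

theorem hasDerivAt_intervalIntegral_of_continuousOn_Ioi {J : ℝ → ℝ}
    (hJ : ContinuousOn J (Ioi 0)) {a x : ℝ} (ha : 0 < a) (hx : 0 < x) :
    HasDerivAt (fun t => ∫ ξ in a..t, J ξ) (J x) x :=
  intervalIntegral.integral_hasDerivAt_right
    ((hJ.mono fun _ ht => (lt_min ha hx).trans_le ht.1).intervalIntegrable)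
    (hJ.stronglyMeasurableAtFilter isOpen_Ioi x hx) (hJ.continuousAt (Ioi_mem_nhds hx))

theorem stmt2_general
    (u d p q : ℝ)
    (hu : 1 < u) (hd1 : d < 1) (hp0 : 0 < p) (hp1 : p < 1)
    (hq : q = (1 - d) / (u - d))
    (U₀ I₁ J₁ : ℝ → ℝ)
    (hU₀ : IsUtility U₀)
    (hI₁ : IsInvMarginal I₁)
    (hJ₁ : IsInverseOf J₁ I₁)
    (U₁ : ℝ → ℝ)
    (hU₁def : ∀ x > 0, U₁ x =
      U₀ 1 + p * (∫ ξ in (I₁ ((q / p) * deriv U₀ 1))..x, J₁ ξ)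
        + (1 - p) * (∫ ξ in (I₁ (((1 - q) / (1 - p)) * deriv U₀ 1))..x, J₁ ξ)) :
    IsUtility U₁ ∧ (∀ x > 0, deriv U₁ x = J₁ x) ∧ InvMarginalOf I₁ U₁ := by
  have hq0 : 0 < q := hq ▸ div_pos (by linarith) (by linarith)
  have hq1 : q < 1 := by rw [hq, div_lt_one (by linarith)]; linarith
  have hU₀' : 0 < deriv U₀ 1 := hU₀.2.1 1 one_pos
  have hbase₁ : 0 < I₁ ((q / p) * deriv U₀ 1) := hI₁.1 _ (by positivity)
  have hbase₂ : 0 < I₁ (((1 - q) / (1 - p)) * deriv U₀ 1) :=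
    hI₁.1 _ (mul_pos (div_pos (by linarith) (by linarith)) hU₀')
  have hJc := hJ₁.continuousOn hI₁
  have hU₁' : ∀ x > 0, HasDerivAt U₁ (J₁ x) x := by
    intro x hx
    have h := (((hasDerivAt_intervalIntegral_of_continuousOn_Ioi hJc hbase₁ hx).const_mul p
      ).const_add (U₀ 1)).add
      ((hasDerivAt_intervalIntegral_of_continuousOn_Ioi hJc hbase₂ hx).const_mul (1 - p))
    rw [show p * J₁ x + (1 - p) * J₁ x = J₁ x by ring] at h
    exact h.congr_of_eventuallyEq (eventually_of_mem (Ioi_mem_nhds hx) hU₁def)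
  obtain ⟨hUtility, hInvMarginal⟩ := hJ₁.isUtility_of_hasDerivAt hI₁ hU₁'
  exact ⟨hUtility, fun x hx => (hU₁' x hx).deriv, hInvMarginal⟩

/-- Given a utility `U₀` with inverse marginal `I₀`, and an inverse marginal
function `I₁` solving the functional equation, the function
`U₁(x) = U₀(1) + p·∫_{I₁((q/p)U₀'(1))}^x I₁⁻¹ + (1−p)·∫_{I₁(((1−q)/(1−p))U₀'(1))}^x I₁⁻¹`
is a utility function with `U₁' = I₁⁻¹`; in particular its inverse marginal is `I₁`. -/
theorem stmt2
    (u d p q a b c : ℝ)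
    (hu : 1 < u) (hd0 : 0 < d) (hd1 : d < 1) (hp0 : 0 < p) (hp1 : p < 1)
    (hq : q = (1 - d) / (u - d)) (ha : a = ((1 - p) * q) / (p * (1 - q)))
    (hb : b = (1 - q) / q) (hc : c = (1 - p) / (1 - q))
    (U₀ I₀ I₁ J₁ : ℝ → ℝ)
    (hU₀ : IsUtility U₀) (hI₀ : InvMarginalOf I₀ U₀)
    (hI₁ : IsInvMarginal I₁)
    (hfeq : ∀ y > 0, I₁ (a * y) + b * I₁ y = (1 + b) * I₀ (c * y))
    (hJ₁ : IsInverseOf J₁ I₁)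
    (U₁ : ℝ → ℝ)
    (hU₁def : ∀ x > 0, U₁ x =
      U₀ 1 + p * (∫ ξ in (I₁ ((q / p) * deriv U₀ 1))..x, J₁ ξ)
        + (1 - p) * (∫ ξ in (I₁ (((1 - q) / (1 - p)) * deriv U₀ 1))..x, J₁ ξ)) :
    IsUtility U₁ ∧ (∀ x > 0, deriv U₁ x = J₁ x) ∧ InvMarginalOf I₁ U₁ :=
  stmt2_general u d p q hu hd1 hp0 hp1 hq U₀ I₁ J₁ hU₀ hI₁ hJ₁ U₁ hU₁def
end
end

section
/- Assume a ≠ 1 and L := ln b / ln a < 0. Let I₀(y) = y^L for y > 0 and set δ = (1+b)·c^L/(2b). Then the function I₁(y) = δ·y^L is an inverse marginal function and satisfies the functional equation I₁(a·y) + b·I₁(y) = (1+b)·I₀(c·y) for all y > 0. -/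
open Set Filter

noncomputable section

/-! Since `L = log_a b` we have `a ^ L = b`, so the left side of the functional equation is
`2 b δ y ^ L`, and `δ` is chosen to make this `(1 + b) c ^ L y ^ L = (1 + b) (c y) ^ L`. -/

theorem isInvMarginal_const_mul_rpow {δ L : ℝ} (hδ : 0 < δ) (hL : L < 0) :
    IsInvMarginal (fun y => δ * y ^ L) := by
  refine ⟨fun y hy => by positivity, ?_, fun y hy => ?_, ?_, ?_⟩
  · exact fun y hy =>
      ((Real.contDiffAt_rpow_const_of_ne hy.ne').const_smul δ).contDiffWithinAt
  · rw [((Real.hasDerivAt_rpow_const (Or.inl hy.ne')).const_mul δ).deriv]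
    exact mul_neg_of_pos_of_neg hδ (mul_neg_of_neg_of_pos hL (by positivity))
  · simpa using (tendsto_rpow_neg_atTop (neg_pos.2 hL)).const_mul δ
  · exact (tendsto_rpow_neg_nhdsGT_zero hL).const_mul_atTop hδ

theorem const_mul_mul_rpow_logb_add {a b δ y : ℝ} (ha : 0 < a) (ha1 : a ≠ 1) (hb : 0 < b)
    (hy : 0 ≤ y) :
    δ * (a * y) ^ Real.logb a b + b * (δ * y ^ Real.logb a b) =
      2 * b * δ * y ^ Real.logb a b := by
  rw [Real.mul_rpow ha.le hy, Real.rpow_logb ha ha1 hb]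
  ring

theorem riskNeutralProb_mem_Ioo {u d : ℝ} (hu : 1 < u) (hd1 : d < 1) :
    (1 - d) / (u - d) ∈ Ioo 0 1 :=
  ⟨div_pos (by linarith) (by linarith), (div_lt_one (by linarith)).2 (by linarith)⟩

theorem stmt6_general
    (u d p q a b c L δ : ℝ)
    (hu : 1 < u) (hd1 : d < 1) (hp0 : 0 < p) (hp1 : p < 1)
    (hq : q = (1 - d) / (u - d)) (ha : a = ((1 - p) * q) / (p * (1 - q)))
    (hb : b = (1 - q) / q) (hc : c = (1 - p) / (1 - q))
    (ha1 : a ≠ 1)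
    (hL : L = Real.log b / Real.log a) (hLneg : L < 0)
    (hδ : δ = (1 + b) * c ^ L / (2 * b)) :
    IsInvMarginal (fun y => δ * y ^ L) ∧
    ∀ y > 0, δ * (a * y) ^ L + b * (δ * y ^ L) = (1 + b) * (c * y) ^ L := by
  obtain ⟨hq0, hq1⟩ : q ∈ Ioo 0 1 := hq ▸ riskNeutralProb_mem_Ioo hu hd1
  have ha0 : 0 < a := by rw [ha]; exact div_pos (by nlinarith) (by nlinarith)
  have hb0 : 0 < b := by rw [hb]; exact div_pos (by linarith) hq0
  have hc0 : 0 < c := by rw [hc]; exact div_pos (by linarith) (by linarith)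
  have hL' : L = Real.logb a b := hL
  refine ⟨isInvMarginal_const_mul_rpow (by rw [hδ]; positivity) hLneg, fun y hy => ?_⟩
  rw [hL', const_mul_mul_rpow_logb_add ha0 ha1 hb0 hy.le, ← hL', Real.mul_rpow hc0.le hy.le, hδ]
  field_simp

/-- For `I₀(y) = y^L` with `L = log_a b < 0` and `δ = (1+b)·c^L/(2b)`, the
function `I₁(y) = δ·y^L` is an inverse marginal function solving the functional equation. -/
theorem stmt6
    (u d p q a b c L δ : ℝ)
    (hu : 1 < u) (hd0 : 0 < d) (hd1 : d < 1) (hp0 : 0 < p) (hp1 : p < 1)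
    (hq : q = (1 - d) / (u - d)) (ha : a = ((1 - p) * q) / (p * (1 - q)))
    (hb : b = (1 - q) / q) (hc : c = (1 - p) / (1 - q))
    (ha1 : a ≠ 1)
    (hL : L = Real.log b / Real.log a) (hLneg : L < 0)
    (hδ : δ = (1 + b) * c ^ L / (2 * b)) :
    IsInvMarginal (fun y => δ * y ^ L) ∧
    ∀ y > 0, δ * (a * y) ^ L + b * (δ * y ^ L) = (1 + b) * (c * y) ^ L :=
  stmt6_general u d p q a b c L δ hu hd1 hp0 hp1 hq ha hb hc ha1 hL hLneg hδ
end
end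

section
/- Assume a ≠ 1 and set L = ln b / ln a. Let I₀ : (0,∞) → ℝ be any given function. Then there is at most one function I : (0,∞) → ℝ satisfying both I(a·y) + b·I(y) = (1+b)·I₀(c·y) for all y > 0 and lim_{y→0+} y^{−L}·I(y) = 0; that is, any two such functions coincide on (0,∞). -/
open Set Filter

noncomputable section

lemma aux_uniq (a b L : ℝ) (ha0 : 0 < a) (ha1 : a < 1) (hb0 : 0 < b)
    (hab : a ^ L = b) (D : ℝ → ℝ)
    (hD : ∀ y > 0, D (a * y) = -b * D y)
    (hlim : Tendsto (fun y => y ^ (-L) * D y) (nhdsWithin 0 (Set.Ioi 0)) (nhds 0)) :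
    ∀ y > 0, D y = 0 := by
  intro y hy
  have key : ∀ n : ℕ, ∀ z > 0, (a ^ n * z) ^ (-L) * D (a ^ n * z)
      = (-1 : ℝ) ^ n * (z ^ (-L) * D z) := by
    intro n
    induction n with
    | zero => intro z hz; simp
    | succ n ih =>
      intro z hz
      have haz : 0 < a * z := mul_pos ha0 hz
      have h1 : a ^ (n + 1) * z = a ^ n * (a * z) := by ring
      rw [h1, ih (a * z) haz]
      have h2 : (a * z) ^ (-L) = a ^ (-L) * z ^ (-L) :=
        Real.mul_rpow ha0.le hz.le
      have h3 : a ^ (-L) = b⁻¹ := by rw [Real.rpow_neg ha0.le, hab]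
      rw [h2, h3, hD z hz]
      have hbne : b ≠ 0 := hb0.ne'
      field_simp
      ring
  set f : ℝ → ℝ := fun y => y ^ (-L) * D y with hf
  have hseq : Tendsto (fun n : ℕ => a ^ n * y) atTop (nhdsWithin 0 (Set.Ioi 0)) := by
    rw [tendsto_nhdsWithin_iff]
    constructor
    · have := (tendsto_pow_atTop_nhds_zero_of_lt_one ha0.le ha1).mul_const y
      simpa using this
    · exact Eventually.of_forall fun n => mul_pos (pow_pos ha0 n) hy
  have hcomp : Tendsto (fun n : ℕ => f (a ^ n * y)) atTop (nhds 0) := hlim.comp hseq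
  have heq : (fun n : ℕ => |f (a ^ n * y)|) = fun _ => |f y| := by
    funext n
    simp only [hf, key n y hy, abs_mul, abs_pow, abs_neg, abs_one, one_pow, one_mul]
  have habs : Tendsto (fun n : ℕ => |f (a ^ n * y)|) atTop (nhds 0) := by
    simpa using hcomp.abs
  rw [heq] at habs
  have : |f y| = 0 := tendsto_nhds_unique tendsto_const_nhds habs
  have hfy : f y = 0 := abs_eq_zero.mp this
  have hyL : y ^ (-L) ≠ 0 := (Real.rpow_pos_of_pos hy _).ne'
  have := mul_eq_zero.mp hfy
  tauto

/-- Uniqueness for the functional equation among functions `I` with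
`lim_{y→0⁺} y^{−L}·I(y) = 0`, where `L = log_a b`. -/
theorem stmt8
    (u d p q a b c L : ℝ)
    (hu : 1 < u) (hd0 : 0 < d) (hd1 : d < 1) (hp0 : 0 < p) (hp1 : p < 1)
    (hq : q = (1 - d) / (u - d)) (ha : a = ((1 - p) * q) / (p * (1 - q)))
    (hb : b = (1 - q) / q) (hc : c = (1 - p) / (1 - q))
    (ha1 : a ≠ 1)
    (hL : L = Real.log b / Real.log a)
    (I₀ I J : ℝ → ℝ)
    (hIfeq : ∀ y > 0, I (a * y) + b * I y = (1 + b) * I₀ (c * y))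
    (hIlim : Tendsto (fun y => y ^ (-L) * I y) (nhdsWithin 0 (Set.Ioi 0)) (nhds 0))
    (hJfeq : ∀ y > 0, J (a * y) + b * J y = (1 + b) * I₀ (c * y))
    (hJlim : Tendsto (fun y => y ^ (-L) * J y) (nhdsWithin 0 (Set.Ioi 0)) (nhds 0)) :
    ∀ y > 0, I y = J y := by
  have hud : 0 < u - d := by linarith
  have hq0 : 0 < q := by rw [hq]; apply div_pos <;> linarith
  have hq1 : q < 1 := by
    rw [hq, div_lt_one hud]; linarith
  have ha0 : 0 < a := by
    rw [ha]
    apply div_pos <;> [skip; skip] <;> apply mul_pos <;> linarith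
  have hb0 : 0 < b := by rw [hb]; apply div_pos <;> linarith
  have hab : a ^ L = b := by
    rw [hL]
    have : Real.log b / Real.log a = Real.logb a b := rfl
    rw [this, Real.rpow_logb ha0 ha1 hb0]
  set D : ℝ → ℝ := fun y => I y - J y with hDdef
  have hD : ∀ y > 0, D (a * y) = -b * D y := by
    intro y hy
    have h1 := hIfeq y hy
    have h2 := hJfeq y hy
    simp only [hDdef]
    linarith
  have hlim : Tendsto (fun y => y ^ (-L) * D y) (nhdsWithin 0 (Set.Ioi 0)) (nhds 0) := by
    have := hIlim.sub hJlim
    simp only [sub_zero, hDdef] at this ⊢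
    convert this using 2 with y
    ring
  have hfin : ∀ y > 0, D y = 0 := by
    rcases lt_or_gt_of_ne ha1 with hlt | hgt
    · exact aux_uniq a b L ha0 hlt hb0 hab D hD hlim
    · have hainv : (0:ℝ) < a⁻¹ := inv_pos.mpr ha0
      have hainv1 : a⁻¹ < 1 := inv_lt_one_of_one_lt₀ hgt
      have hbinv : (0:ℝ) < b⁻¹ := inv_pos.mpr hb0
      have habinv : a⁻¹ ^ L = b⁻¹ := by
        rw [Real.inv_rpow ha0.le, hab]
      have hDinv : ∀ y > 0, D (a⁻¹ * y) = -b⁻¹ * D y := by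
        intro y hy
        have hy' : 0 < a⁻¹ * y := mul_pos hainv hy
        have := hD (a⁻¹ * y) hy'
        rw [← mul_assoc, mul_inv_cancel₀ ha0.ne', one_mul] at this
        field_simp at this ⊢
        linarith
      exact aux_uniq a⁻¹ b⁻¹ L hainv hainv1 hbinv habinv D hDinv hlim
  intro y hy
  have := hfin y hy
  simp only [hDdef] at this
  linarith
end
end

section
/- Assume a ≠ 1 and set L = ln b / ln a. Let I₀ : (0,∞) → ℝ be any given function. Then there is at most one function I : (0,∞) → ℝ satisfying both I(a·y) + b·I(y) = (1+b)·I₀(c·y) for all y > 0 and lim_{y→∞} y^{−L}·I(y) = 0; that is, any two such functions coincide on (0,∞). -/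
open Set Filter

noncomputable section

/-! `D = I - J` satisfies `D (a y) = -b D y` with `b = a ^ L`, so `g y = y ^ (-L) D y`
satisfies `|g (a y)| = |g y|`. Iterating along `y, a y, a² y, …` (or `a⁻¹` in place of `a`
when `a < 1`) pushes `y` to infinity without changing `|g y|`, and `g → 0` forces `g y = 0`. -/

lemma riskNeutral_prob_mem_Ioo {u d : ℝ} (hu : 1 < u) (hd : d < 1) :
    (1 - d) / (u - d) ∈ Ioo 0 1 :=
  ⟨div_pos (by linarith) (by linarith), (div_lt_one (by linarith)).2 (by linarith)⟩

lemma eq_zero_of_abs_map_mul_eq_of_one_lt {g : ℝ → ℝ} {r : ℝ} (hr : 1 < r)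
    (hg : ∀ z > 0, |g (r * z)| = |g z|) (hlim : Tendsto g atTop (nhds 0)) :
    ∀ y > 0, g y = 0 := by
  intro y hy
  have horbit : ∀ n : ℕ, |g (r ^ n * y)| = |g y| := by
    intro n
    induction n with
    | zero => simp
    | succ n ih => rw [pow_succ', mul_assoc, hg _ (by positivity), ih]
  have hto_top : Tendsto (fun n : ℕ => r ^ n * y) atTop atTop :=
    (tendsto_pow_atTop_atTop_of_one_lt hr).atTop_mul_const hy
  have hconst : Tendsto (fun _ : ℕ => |g y|) atTop (nhds 0) := by
    simpa only [Function.comp_def, horbit, abs_zero] using (hlim.comp hto_top).abs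
  exact abs_eq_zero.1 (tendsto_nhds_unique tendsto_const_nhds hconst)

lemma eq_zero_of_abs_map_mul_eq {g : ℝ → ℝ} {r : ℝ} (hr0 : 0 < r) (hr1 : r ≠ 1)
    (hg : ∀ z > 0, |g (r * z)| = |g z|) (hlim : Tendsto g atTop (nhds 0)) :
    ∀ y > 0, g y = 0 := by
  rcases hr1.lt_or_gt with hlt | hgt
  · refine eq_zero_of_abs_map_mul_eq_of_one_lt (one_lt_inv₀ hr0 |>.2 hlt) (fun z hz => ?_) hlim
    rw [← hg _ (by positivity), mul_inv_cancel_left₀ hr0.ne']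
  · exact eq_zero_of_abs_map_mul_eq_of_one_lt hgt hg hlim

lemma rpow_neg_mul_mul_rpow_mul {r z : ℝ} (hr : 0 < r) (hz : 0 < z) (L x : ℝ) :
    (r * z) ^ (-L) * (r ^ L * x) = z ^ (-L) * x := by
  rw [Real.mul_rpow hr.le hz.le, Real.rpow_neg hr.le]
  field_simp

lemma eq_zero_of_map_mul_eq_neg_rpow_mul {D : ℝ → ℝ} {r L : ℝ} (hr0 : 0 < r) (hr1 : r ≠ 1)
    (hD : ∀ z > 0, D (r * z) = -(r ^ L * D z))
    (hlim : Tendsto (fun y => y ^ (-L) * D y) atTop (nhds 0)) :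
    ∀ y > 0, D y = 0 := by
  have hg : ∀ z > 0, |(r * z) ^ (-L) * D (r * z)| = |z ^ (-L) * D z| := fun z hz => by
    rw [hD z hz, mul_neg, abs_neg, rpow_neg_mul_mul_rpow_mul hr0 hz]
  intro y hy
  have hgy := eq_zero_of_abs_map_mul_eq hr0 hr1 hg hlim y hy
  exact (mul_eq_zero.1 hgy).resolve_left (Real.rpow_pos_of_pos hy _).ne'

theorem stmt9_general
    (u d p q a b c L : ℝ)
    (hu : 1 < u) (hd1 : d < 1) (hp0 : 0 < p) (hp1 : p < 1)
    (hq : q = (1 - d) / (u - d)) (ha : a = ((1 - p) * q) / (p * (1 - q)))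
    (hb : b = (1 - q) / q)
    (ha1 : a ≠ 1)
    (hL : L = Real.log b / Real.log a)
    (I₀ I J : ℝ → ℝ)
    (hIfeq : ∀ y > 0, I (a * y) + b * I y = (1 + b) * I₀ (c * y))
    (hIlim : Tendsto (fun y => y ^ (-L) * I y) atTop (nhds 0))
    (hJfeq : ∀ y > 0, J (a * y) + b * J y = (1 + b) * I₀ (c * y))
    (hJlim : Tendsto (fun y => y ^ (-L) * J y) atTop (nhds 0)) :
    ∀ y > 0, I y = J y := by
  obtain ⟨hq0, hq1⟩ := hq ▸ riskNeutral_prob_mem_Ioo hu hd1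
  have ha0 : 0 < a := ha ▸ div_pos (mul_pos (sub_pos.2 hp1) hq0) (mul_pos hp0 (sub_pos.2 hq1))
  have hb0 : 0 < b := hb ▸ div_pos (sub_pos.2 hq1) hq0
  have hab : a ^ L = b := hL ▸ Real.rpow_logb ha0 ha1 hb0
  have hD : ∀ z > 0, (I - J) (a * z) = -(a ^ L * (I - J) z) := fun z hz => by
    simp only [Pi.sub_apply, hab]
    linarith [hIfeq z hz, hJfeq z hz]
  have hlim : Tendsto (fun y => y ^ (-L) * (I - J) y) atTop (nhds 0) := by
    simpa only [Pi.sub_apply, mul_sub, sub_zero] using hIlim.sub hJlim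
  intro y hy
  exact sub_eq_zero.1 (eq_zero_of_map_mul_eq_neg_rpow_mul ha0 ha1 hD hlim y hy)

/-- Uniqueness for the functional equation among functions `I` with
`lim_{y→∞} y^{−L}·I(y) = 0`, where `L = log_a b`. -/
theorem stmt9
    (u d p q a b c L : ℝ)
    (hu : 1 < u) (hd0 : 0 < d) (hd1 : d < 1) (hp0 : 0 < p) (hp1 : p < 1)
    (hq : q = (1 - d) / (u - d)) (ha : a = ((1 - p) * q) / (p * (1 - q)))
    (hb : b = (1 - q) / q) (hc : c = (1 - p) / (1 - q))
    (ha1 : a ≠ 1)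
    (hL : L = Real.log b / Real.log a)
    (I₀ I J : ℝ → ℝ)
    (hIfeq : ∀ y > 0, I (a * y) + b * I y = (1 + b) * I₀ (c * y))
    (hIlim : Tendsto (fun y => y ^ (-L) * I y) atTop (nhds 0))
    (hJfeq : ∀ y > 0, J (a * y) + b * J y = (1 + b) * I₀ (c * y))
    (hJlim : Tendsto (fun y => y ^ (-L) * J y) atTop (nhds 0)) :
    ∀ y > 0, I y = J y :=
  stmt9_general u d p q a b c L hu hd1 hp0 hp1 hq ha hb ha1 hL I₀ I J hIfeq hIlim hJfeq hJlim
end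
end

section
/- Let a, b > 0 with a ≠ 1 and set L = ln b / ln a. Suppose w : (0,∞) → ℝ satisfies w(a·y) = −b·w(y) for all y > 0, and suppose that either lim_{y→0+} y^{−L}·w(y) = 0 or lim_{y→∞} y^{−L}·w(y) = 0. Then w(y) = 0 for all y > 0. -/
/-! With `a ^ L = b`, the function `g y = y ^ (-L) * w y` satisfies `g (a * y) = -g y`, so `|g|` is
invariant under `y ↦ a * y` and `y ↦ a⁻¹ * y`. One of the orbits `a ^ n * y`, `a⁻¹ ^ n * y` tends
to `0⁺` and the other to `∞`; along the one where `g → 0`, `|g|` is the constant `|g y|`, which must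
therefore vanish. -/

open Set Filter

noncomputable section

section ScaleInvariant

variable {f : ℝ → ℝ} {c : ℝ}

theorem abs_apply_pow_mul_eq (hc : 0 < c) (hf : ∀ y > 0, |f (c * y)| = |f y|) (n : ℕ) {y : ℝ}
    (hy : 0 < y) : |f (c ^ n * y)| = |f y| := by
  induction n with
  | zero => simp
  | succ n ih => rw [pow_succ', mul_assoc, hf _ (by positivity), ih]

theorem abs_apply_inv_mul_eq (hc : 0 < c) (hf : ∀ y > 0, |f (c * y)| = |f y|) {y : ℝ}
    (hy : 0 < y) : |f (c⁻¹ * y)| = |f y| := by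
  rw [← hf _ (by positivity), mul_inv_cancel_left₀ hc.ne']

theorem eq_zero_of_abs_apply_seq_eq {s : ℕ → ℝ} {y : ℝ} (hs : ∀ n, |f (s n)| = |f y|)
    (hlim : Tendsto (fun n => f (s n)) atTop (nhds 0)) : f y = 0 := by
  have h : Tendsto (fun n => |f (s n)|) atTop (nhds 0) := by simpa using hlim.abs
  simp only [hs] at h
  exact abs_eq_zero.mp (tendsto_nhds_unique tendsto_const_nhds h)

theorem eq_zero_of_abs_apply_mul_eq_of_tendsto_nhdsGT (hc0 : 0 < c) (hc1 : c < 1)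
    (hf : ∀ y > 0, |f (c * y)| = |f y|) (hlim : Tendsto f (nhdsWithin 0 (Ioi 0)) (nhds 0)) :
    ∀ y > 0, f y = 0 := by
  intro y hy
  refine eq_zero_of_abs_apply_seq_eq (fun n => abs_apply_pow_mul_eq hc0 hf n hy) (hlim.comp ?_)
  refine tendsto_nhdsWithin_iff.mpr ⟨?_, Eventually.of_forall fun n => ?_⟩
  · simpa using (tendsto_pow_atTop_nhds_zero_of_lt_one hc0.le hc1).mul_const y
  · exact mul_pos (pow_pos hc0 n) hy

theorem eq_zero_of_abs_apply_mul_eq_of_tendsto_atTop (hc1 : 1 < c)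
    (hf : ∀ y > 0, |f (c * y)| = |f y|) (hlim : Tendsto f atTop (nhds 0)) :
    ∀ y > 0, f y = 0 := fun y hy =>
  eq_zero_of_abs_apply_seq_eq (fun n => abs_apply_pow_mul_eq (by linarith) hf n hy)
    (hlim.comp ((tendsto_pow_atTop_atTop_of_one_lt hc1).atTop_mul_const hy))

theorem eq_zero_of_abs_apply_mul_eq (hc0 : 0 < c) (hc1 : c ≠ 1)
    (hf : ∀ y > 0, |f (c * y)| = |f y|)
    (hlim : Tendsto f (nhdsWithin 0 (Ioi 0)) (nhds 0) ∨ Tendsto f atTop (nhds 0)) :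
    ∀ y > 0, f y = 0 := by
  have hf' : ∀ y > 0, |f (c⁻¹ * y)| = |f y| := fun y hy => abs_apply_inv_mul_eq hc0 hf hy
  rcases hc1.lt_or_gt with hlt | hgt
  · rcases hlim with h0 | hinf
    · exact eq_zero_of_abs_apply_mul_eq_of_tendsto_nhdsGT hc0 hlt hf h0
    · exact eq_zero_of_abs_apply_mul_eq_of_tendsto_atTop ((one_lt_inv₀ hc0).mpr hlt) hf' hinf
  · rcases hlim with h0 | hinf
    · exact eq_zero_of_abs_apply_mul_eq_of_tendsto_nhdsGT (inv_pos.mpr hc0)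
        (inv_lt_one_of_one_lt₀ hgt) hf' h0
    · exact eq_zero_of_abs_apply_mul_eq_of_tendsto_atTop hgt hf hinf

end ScaleInvariant

theorem rpow_neg_mul_apply_mul_eq_neg {a b L : ℝ} {w : ℝ → ℝ} (ha0 : 0 < a) (haL : a ^ L = b)
    (hb0 : 0 < b) (hw : ∀ y > 0, w (a * y) = -b * w y) {y : ℝ} (hy : 0 < y) :
    (a * y) ^ (-L) * w (a * y) = -(y ^ (-L) * w y) := by
  rw [Real.mul_rpow ha0.le hy.le, Real.rpow_neg ha0.le, haL, hw y hy]
  field_simp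

/-- If `w(a·y) = −b·w(y)` on `(0,∞)` and `y^{−L}·w(y)` tends to `0` either as
`y → 0⁺` or as `y → ∞`, where `L = log_a b`, then `w ≡ 0` on `(0,∞)`. -/
theorem stmt10
    (a b L : ℝ) (ha0 : 0 < a) (hb0 : 0 < b) (ha1 : a ≠ 1)
    (hL : L = Real.log b / Real.log a)
    (w : ℝ → ℝ)
    (hw : ∀ y > 0, w (a * y) = -b * w y)
    (hlim : Tendsto (fun y => y ^ (-L) * w y) (nhdsWithin 0 (Set.Ioi 0)) (nhds 0) ∨
            Tendsto (fun y => y ^ (-L) * w y) atTop (nhds 0)) :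
    ∀ y > 0, w y = 0 := by
  have haL : a ^ L = b := hL ▸ Real.rpow_logb ha0 ha1 hb0
  have hg : ∀ y > 0, |(a * y) ^ (-L) * w (a * y)| = |y ^ (-L) * w y| := fun y hy => by
    rw [rpow_neg_mul_apply_mul_eq_neg ha0 haL hb0 hw hy, abs_neg]
  intro y hy
  have hgy := eq_zero_of_abs_apply_mul_eq ha0 ha1 hg hlim y hy
  exact (mul_eq_zero.mp hgy).resolve_left (Real.rpow_pos_of_pos hy _).ne'
end
end

section
/- Assume a ≠ 1 and let I₀ be an inverse marginal function. Set Φ₀(y) = I₀(a·c·y) − b·I₀(c·y) and Ψ₀(y) = y^{−L}·I₀(c·y) for y > 0, where L = ln b / ln a. Suppose Φ₀ is strictly increasing on (0,∞) and that either (a > 1 and lim_{y→∞} Ψ₀(y) = 0) or (a < 1 and lim_{y→0+} Ψ₀(y) = 0). Then for every y > 0 the series I₁(y) = ((1+b)/b)·∑_{m=0}^{∞} (−1)^m · b^{−m} · I₀(a^m · c · y) converges, and the resulting function I₁ satisfies the functional equation I₁(a·y) + b·I₁(y) = (1+b)·I₀(c·y) for all y > 0. -/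
/-!
Write `t_m(y) = b^{-m} I₀(a^m c y)`, so that `I₁(y) = ((1+b)/b) ∑ (-1)^m t_m(y)`.
Since `a^L = b`, `t_m(y) = y^L Ψ₀(a^m y)`, which tends to `0` by the hypothesis on `Ψ₀`.
Moreover `t_{m+1}(y) - t_m(y) = b^{-(m+1)} Φ₀(a^m y)`. A positive sequence tending to `0` decreases
infinitely often, so `Φ₀(a^m y) ≤ 0` for infinitely many `m`, and the monotonicity of `Φ₀` along
the geometric sequence `a^m y` upgrades this to all large `m`. The Leibniz criterion then gives
convergence, and the functional equation already holds for the partial sums, which telescope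
because `t_m(a y) = b t_{m+1}(y)`.
-/

open Set Filter

noncomputable section

theorem frequently_succ_le_of_tendsto_zero {t : ℕ → ℝ} (ht : ∀ m, 0 < t m)
    (h : Tendsto t atTop (nhds 0)) : ∃ᶠ m in atTop, t (m + 1) ≤ t m := by
  rw [frequently_atTop]
  intro m₀
  by_contra! hinc
  have hge : ∀ m ≥ m₀, t m₀ ≤ t m := fun m hm =>
    Nat.le_induction le_rfl (fun n hn ih => ih.trans (hinc n hn).le) m hm
  have := ge_of_tendsto h (eventually_atTop.2 ⟨m₀, hge⟩)
  linarith [ht m₀]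

theorem Monotone.eventually_le_of_frequently_le {α β : Type*} [Preorder α] [IsDirectedOrder α]
    [Nonempty α] [Preorder β] {s : α → β} {c : β} (hs : Monotone s)
    (h : ∃ᶠ x in atTop, s x ≤ c) : ∀ᶠ x in atTop, s x ≤ c := by
  refine Eventually.of_forall fun x => ?_
  obtain ⟨x', hxx', hx'⟩ := frequently_atTop.1 h x
  exact (hs hxx').trans hx'

theorem Antitone.eventually_le_of_frequently_le {α β : Type*} [Preorder α] [IsDirectedOrder α]
    [Nonempty α] [Preorder β] {s : α → β} {c : β} (hs : Antitone s)
    (h : ∃ᶠ x in atTop, s x ≤ c) : ∀ᶠ x in atTop, s x ≤ c := by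
  obtain ⟨x₀, hx₀⟩ := h.exists
  exact eventually_atTop.2 ⟨x₀, fun x hx => (hs hx).trans hx₀⟩

theorem exists_tendsto_alternating_series_of_eventually_antitone {f : ℕ → ℝ}
    (hfa : ∀ᶠ m in atTop, f (m + 1) ≤ f m) (hf0 : Tendsto f atTop (nhds 0)) :
    ∃ l, Tendsto (fun n => ∑ m ∈ Finset.range n, (-1) ^ m * f m) atTop (nhds l) := by
  obtain ⟨m₀, hm₀⟩ := eventually_atTop.1 hfa
  have htail : Antitone fun k => f (m₀ + k) :=
    antitone_nat_of_succ_le fun k => hm₀ (m₀ + k) (Nat.le_add_right _ _)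
  obtain ⟨l, hl⟩ := htail.tendsto_alternating_series_of_tendsto_zero
    (by simpa only [add_comm _ m₀] using (tendsto_add_atTop_iff_nat m₀).2 hf0)
  refine ⟨∑ m ∈ Finset.range m₀, (-1) ^ m * f m + (-1) ^ m₀ * l, ?_⟩
  rw [← tendsto_add_atTop_iff_nat m₀]
  refine (tendsto_const_nhds.add (hl.const_mul _)).congr fun n => ?_
  rw [add_comm n m₀, Finset.sum_range_add, Finset.mul_sum]
  congr 1
  exact Finset.sum_congr rfl fun k _ => by rw [pow_add]; ring

section SeriesTerm

variable {a b c : ℝ} {I : ℝ → ℝ}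

def seriesTerm (a b c : ℝ) (I : ℝ → ℝ) (y : ℝ) (m : ℕ) : ℝ :=
  b ^ (-(m : ℤ)) * I (a ^ m * c * y)

theorem seriesTerm_pos (ha : 0 < a) (hb : 0 < b) (hc : 0 < c) (hI : ∀ y > 0, 0 < I y)
    {y : ℝ} (hy : 0 < y) (m : ℕ) : 0 < seriesTerm a b c I y m :=
  mul_pos (zpow_pos hb _) (hI _ (by positivity))

theorem seriesTerm_mul_left (hb : b ≠ 0) (y : ℝ) (m : ℕ) :
    seriesTerm a b c I (a * y) m = b * seriesTerm a b c I y (m + 1) := by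
  rw [seriesTerm, seriesTerm, show a ^ m * c * (a * y) = a ^ (m + 1) * c * y by ring]
  push_cast
  rw [neg_add, zpow_add₀ hb, zpow_neg_one]
  field_simp

theorem seriesTerm_succ_sub (hb : b ≠ 0) (y : ℝ) (m : ℕ) :
    seriesTerm a b c I y (m + 1) - seriesTerm a b c I y m =
      b ^ (-(m + 1 : ℤ)) * (I (a * c * (a ^ m * y)) - b * I (c * (a ^ m * y))) := by
  rw [seriesTerm, seriesTerm, show a * c * (a ^ m * y) = a ^ (m + 1) * c * y by ring,
    show c * (a ^ m * y) = a ^ m * c * y by ring]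
  push_cast
  rw [neg_add, zpow_add₀ hb, zpow_neg_one]
  field_simp

theorem seriesTerm_succ_le_iff (hb : 0 < b) (y : ℝ) (m : ℕ) :
    seriesTerm a b c I y (m + 1) ≤ seriesTerm a b c I y m ↔
      I (a * c * (a ^ m * y)) - b * I (c * (a ^ m * y)) ≤ 0 := by
  rw [← sub_nonpos, seriesTerm_succ_sub hb.ne']
  nth_rw 1 [← mul_zero (b ^ (-(m + 1 : ℤ)))]
  exact mul_le_mul_iff_of_pos_left (zpow_pos hb _)

theorem sum_seriesTerm_mul_left_add (hb : b ≠ 0) (y : ℝ) (N : ℕ) :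
    ∑ m ∈ Finset.range N, (-1) ^ m * seriesTerm a b c I (a * y) m +
      b * ∑ m ∈ Finset.range (N + 1), (-1) ^ m * seriesTerm a b c I y m = b * I (c * y) := by
  rw [Finset.sum_range_succ', mul_add, Finset.mul_sum, ← add_assoc, ← Finset.sum_add_distrib,
    Finset.sum_eq_zero fun m _ => by rw [seriesTerm_mul_left hb, pow_succ]; ring]
  simp [seriesTerm]

theorem seriesTerm_eq_rpow_mul (ha : 0 < a) (ha1 : a ≠ 1) (hb : 0 < b) {y : ℝ} (hy : 0 < y)
    (m : ℕ) : seriesTerm a b c I y m =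
      y ^ Real.logb a b * ((a ^ m * y) ^ (-Real.logb a b) * I (c * (a ^ m * y))) := by
  have hpow : (a ^ m) ^ (-Real.logb a b) = b ^ (-(m : ℤ)) := by
    rw [← Real.rpow_natCast, ← Real.rpow_mul ha.le,
      show (m : ℝ) * -Real.logb a b = Real.logb a b * ((-(m : ℤ) : ℤ) : ℝ) by push_cast; ring,
      Real.rpow_mul ha.le, Real.rpow_logb ha ha1 hb, Real.rpow_intCast]
  rw [seriesTerm, Real.mul_rpow (by positivity) hy.le, hpow, Real.rpow_neg hy.le,
    show c * (a ^ m * y) = a ^ m * c * y by ring]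
  field_simp [(Real.rpow_pos_of_pos hy (Real.logb a b)).ne']

theorem tendsto_seriesTerm_zero (ha : 0 < a) (ha1 : a ≠ 1) (hb : 0 < b) {y : ℝ} (hy : 0 < y)
    (hΨ : (1 < a ∧ Tendsto (fun y => y ^ (-Real.logb a b) * I (c * y)) atTop (nhds 0)) ∨
      (a < 1 ∧ Tendsto (fun y => y ^ (-Real.logb a b) * I (c * y))
        (nhdsWithin 0 (Set.Ioi 0)) (nhds 0))) :
    Tendsto (seriesTerm a b c I y) atTop (nhds 0) := by
  have hΨ_seq : Tendsto (fun m : ℕ => (a ^ m * y) ^ (-Real.logb a b) * I (c * (a ^ m * y)))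
      atTop (nhds 0) := by
    rcases hΨ with ⟨ha1, hΨ⟩ | ⟨ha1, hΨ⟩
    · exact hΨ.comp ((tendsto_pow_atTop_atTop_of_one_lt ha1).atTop_mul_const hy)
    · refine hΨ.comp (tendsto_nhdsWithin_iff.2 ⟨?_, .of_forall fun m => mul_pos (pow_pos ha m) hy⟩)
      simpa using (tendsto_pow_atTop_nhds_zero_of_lt_one ha.le ha1).mul_const y
  simpa only [mul_zero] using (hΨ_seq.const_mul (y ^ Real.logb a b)).congr fun m =>
    (seriesTerm_eq_rpow_mul ha ha1 hb hy m).symm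

theorem eventually_seriesTerm_succ_le (ha : 0 < a) (ha1 : a ≠ 1) (hb : 0 < b) (hc : 0 < c)
    (hI : ∀ y > 0, 0 < I y)
    (hΦ : StrictMonoOn (fun y => I (a * c * y) - b * I (c * y)) (Set.Ioi 0)) {y : ℝ}
    (hy : 0 < y) (h0 : Tendsto (seriesTerm a b c I y) atTop (nhds 0)) :
    ∀ᶠ m in atTop, seriesTerm a b c I y (m + 1) ≤ seriesTerm a b c I y m := by
  have hfreq := frequently_succ_le_of_tendsto_zero (seriesTerm_pos ha hb hc hI hy) h0
  simp only [seriesTerm_succ_le_iff hb] at hfreq ⊢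
  have hmem : ∀ m : ℕ, a ^ m * y ∈ Set.Ioi 0 := fun m => by simp only [Set.mem_Ioi]; positivity
  rcases ha1.lt_or_gt with ha1 | ha1
  · refine Antitone.eventually_le_of_frequently_le (fun m n hmn => ?_) hfreq
    exact hΦ.monotoneOn (hmem n) (hmem m)
      (mul_le_mul_of_nonneg_right (pow_le_pow_of_le_one ha.le ha1.le hmn) hy.le)
  · refine Monotone.eventually_le_of_frequently_le (fun m n hmn => ?_) hfreq
    exact hΦ.monotoneOn (hmem m) (hmem n)
      (mul_le_mul_of_nonneg_right (pow_le_pow_right₀ ha1.le hmn) hy.le)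

end SeriesTerm

theorem stmt11_general
    (u d p q a b c L : ℝ)
    (hu : 1 < u) (hd1 : d < 1) (hp0 : 0 < p) (hp1 : p < 1)
    (hq : q = (1 - d) / (u - d)) (ha : a = ((1 - p) * q) / (p * (1 - q)))
    (hb : b = (1 - q) / q) (hc : c = (1 - p) / (1 - q))
    (ha1 : a ≠ 1)
    (hL : L = Real.log b / Real.log a)
    (I₀ : ℝ → ℝ) (hI₀ : IsInvMarginal I₀)
    (hΦ : StrictMonoOn (fun y => I₀ (a * c * y) - b * I₀ (c * y)) (Set.Ioi 0))
    (hΨ : (1 < a ∧ Tendsto (fun y => y ^ (-L) * I₀ (c * y)) atTop (nhds 0)) ∨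
          (a < 1 ∧ Tendsto (fun y => y ^ (-L) * I₀ (c * y)) (nhdsWithin 0 (Set.Ioi 0)) (nhds 0))) :
    ∃ I₁ : ℝ → ℝ,
      (∀ y > 0, Tendsto
        (fun N => ∑ m ∈ Finset.range N,
          ((1 + b) / b) * ((-1 : ℝ) ^ m * b ^ (-(m : ℤ)) * I₀ (a ^ m * c * y)))
        atTop (nhds (I₁ y))) ∧
      (∀ y > 0, I₁ (a * y) + b * I₁ y = (1 + b) * I₀ (c * y)) := by
  have hq0 : 0 < q := hq ▸ div_pos (by linarith) (by linarith)
  have hq1 : q < 1 := by rw [hq, div_lt_one (by linarith)]; linarith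
  have ha0 : 0 < a := ha ▸ div_pos (mul_pos (by linarith) hq0) (mul_pos hp0 (by linarith))
  have hb0 : 0 < b := hb ▸ div_pos (by linarith) hq0
  have hc0 : 0 < c := hc ▸ div_pos (by linarith) (by linarith)
  subst hL
  set S : ℝ → ℕ → ℝ := fun y N => ∑ m ∈ Finset.range N, (-1) ^ m * seriesTerm a b c I₀ y m
  have hS : ∀ y > 0, Tendsto (S y) atTop (nhds (limUnder atTop (S y))) := fun y hy =>
    have h0 := tendsto_seriesTerm_zero ha0 ha1 hb0 hy hΨ
    tendsto_nhds_limUnder <| exists_tendsto_alternating_series_of_eventually_antitone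
      (eventually_seriesTerm_succ_le ha0 ha1 hb0 hc0 hI₀.1 hΦ hy h0) h0
  refine ⟨fun y => (1 + b) / b * limUnder atTop (S y), fun y hy => ?_, fun y hy => ?_⟩
  · simpa only [S, Finset.mul_sum, seriesTerm, mul_assoc] using (hS y hy).const_mul ((1 + b) / b)
  · have hS_add : limUnder atTop (S (a * y)) + b * limUnder atTop (S y) = b * I₀ (c * y) :=
      tendsto_nhds_unique
        ((hS _ (mul_pos ha0 hy)).add (((hS y hy).comp (tendsto_add_atTop_nat 1)).const_mul b))
        (tendsto_const_nhds.congr fun N => (sum_seriesTerm_mul_left_add hb0.ne' y N).symm)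
    calc (1 + b) / b * limUnder atTop (S (a * y)) + b * ((1 + b) / b * limUnder atTop (S y))
        _ = (1 + b) / b * (b * I₀ (c * y)) := by rw [← hS_add]; ring
        _ = (1 + b) * I₀ (c * y) := by field_simp

/-- Under the increasing-`Φ₀` conditions, the alternating series
`I₁(y) = ((1+b)/b)·∑ (−1)^m b^{−m} I₀(a^m c y)` converges for every `y > 0`, and the resulting
function solves the functional equation. -/
theorem stmt11
    (u d p q a b c L : ℝ)
    (hu : 1 < u) (hd0 : 0 < d) (hd1 : d < 1) (hp0 : 0 < p) (hp1 : p < 1)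
    (hq : q = (1 - d) / (u - d)) (ha : a = ((1 - p) * q) / (p * (1 - q)))
    (hb : b = (1 - q) / q) (hc : c = (1 - p) / (1 - q))
    (ha1 : a ≠ 1)
    (hL : L = Real.log b / Real.log a)
    (I₀ : ℝ → ℝ) (hI₀ : IsInvMarginal I₀)
    (hΦ : StrictMonoOn (fun y => I₀ (a * c * y) - b * I₀ (c * y)) (Set.Ioi 0))
    (hΨ : (1 < a ∧ Tendsto (fun y => y ^ (-L) * I₀ (c * y)) atTop (nhds 0)) ∨
          (a < 1 ∧ Tendsto (fun y => y ^ (-L) * I₀ (c * y)) (nhdsWithin 0 (Set.Ioi 0)) (nhds 0))) :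
    ∃ I₁ : ℝ → ℝ,
      (∀ y > 0, Tendsto
        (fun N => ∑ m ∈ Finset.range N,
          ((1 + b) / b) * ((-1 : ℝ) ^ m * b ^ (-(m : ℤ)) * I₀ (a ^ m * c * y)))
        atTop (nhds (I₁ y))) ∧
      (∀ y > 0, I₁ (a * y) + b * I₁ y = (1 + b) * I₀ (c * y)) :=
  stmt11_general u d p q a b c L hu hd1 hp0 hp1 hq ha hb hc ha1 hL I₀ hI₀ hΦ hΨ
end
end

section
/- Assume a ≠ 1, let θ > 0 with θ ≠ 1 and θ ≠ −ln b/ln a, let U₀(x) = x^{1−1/θ}/(1−1/θ) for x > 0, set δ = (1+b)/(c^{θ}·(a^{−θ} + b)) and U₁(x) = δ^{1/θ}·U₀(x). Then for every x > 0 the portfolio π*(x) = ((δ·(p/q)^{θ} − 1)/(u−1))·x satisfies −x/(u−1) ≤ π*(x) ≤ x/(1−d) and attains the supremum in the single-period inverse investment problem: p·U₁(x + π*(x)·(u−1)) + (1−p)·U₁(x + π*(x)·(d−1)) = U₀(x). -/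
open Set Filter

noncomputable section

/-!
Let `q` be the risk-neutral probability. Any terminal wealth `(K x, L x)` with budget
`q K + (1 - q) L = 1` is replicated by the portfolio `π = (K - 1) x / (u - 1)`, and it is
admissible as soon as `K, L ≥ 0`. The paper's choice is `K = δ r₁^θ`, `L = δ r₂^θ` with
`r₁ = p / q`, `r₂ = (1 - p) / (1 - q)` the two values of `dP/dQ`, and its constant `δ` is
exactly `1 / E_Q[(dP/dQ)^θ]`, which is the budget condition. By homogeneity of the power
utility, the expected `U₁`-utility is `δ^{1/θ} (p K^{1-1/θ} + (1 - p) L^{1-1/θ}) U₀(x)`, and the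
bracket equals `δ E_Q[(dP/dQ)^θ] = 1` because `p r₁^{θ-1} = q r₁^θ` (and likewise for `r₂`).
-/

open Real

lemma riskNeutralProb_mem_Ioo_s19 {u d q : ℝ} (hu : 1 < u) (hd : d < 1)
    (hq : q = (1 - d) / (u - d)) : q ∈ Ioo 0 1 := by
  have hud : 0 < u - d := by linarith
  subst hq
  exact ⟨div_pos (by linarith) hud, (div_lt_one hud).2 (by linarith)⟩

/-- `E_Q[(dP/dQ)^θ]` for the two-point measures `P = (p, 1-p)` and `Q = (q, 1-q)`. -/
def densityMoment (p q θ : ℝ) : ℝ :=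
  q * (p / q) ^ θ + (1 - q) * ((1 - p) / (1 - q)) ^ θ

lemma delta_eq_inv_densityMoment {p q a b c θ : ℝ} (hp0 : 0 < p) (hp1 : p < 1)
    (hq0 : 0 < q) (hq1 : q < 1) (ha : a = ((1 - p) * q) / (p * (1 - q)))
    (hb : b = (1 - q) / q) (hc : c = (1 - p) / (1 - q)) :
    (1 + b) / (c ^ θ * (a ^ (-θ) + b)) = (densityMoment p q θ)⁻¹ := by
  have h1p : 0 < 1 - p := by linarith
  have h1q : 0 < 1 - q := by linarith
  have ha' : a = ((1 - p) / (1 - q)) / (p / q) := by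
    rw [ha]
    field_simp
  have hneg : a ^ (-θ) = (p / q) ^ θ / ((1 - p) / (1 - q)) ^ θ := by
    rw [ha', rpow_neg (by positivity), div_rpow (by positivity) (by positivity), inv_div]
  have hr₁ : 0 < (p / q) ^ θ := by positivity
  have hr₂ : 0 < ((1 - p) / (1 - q)) ^ θ := by positivity
  rw [hneg, hb, hc, densityMoment]
  generalize (p / q) ^ θ = A at *
  generalize ((1 - p) / (1 - q)) ^ θ = B at *
  field_simp
  ring

section Replication

variable {u d q K L x : ℝ}

lemma replicating_wealth_up (hu : u ≠ 1) :
    x + (K - 1) / (u - 1) * x * (u - 1) = K * x := by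
  field_simp
  ring

lemma replicating_wealth_down (hu : u ≠ 1) (hq : q * (u - d) = 1 - d)
    (hKL : q * K + (1 - q) * L = 1) :
    x + (K - 1) / (u - 1) * x * (d - 1) = L * x := by
  have hu' : u - 1 ≠ 0 := sub_ne_zero.2 hu
  field_simp
  linear_combination -(u - d) * x * hKL + (K - L) * x * hq

end Replication

lemma admissible_of_wealth_nonneg {u d x η : ℝ} (hu : 1 < u) (hd : d < 1)
    (hup : 0 ≤ x + η * (u - 1)) (hdown : 0 ≤ x + η * (d - 1)) :
    -(x / (u - 1)) ≤ η ∧ η ≤ x / (1 - d) := by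
  constructor
  · rw [← neg_div, div_le_iff₀ (by linarith)]
    linarith
  · rw [le_div_iff₀ (by linarith)]
    linarith

lemma rpow_inv_mul_rpow_one_sub_inv {δ r θ : ℝ} (hδ : 0 < δ) (hr : 0 < r) (hθ : θ ≠ 0) :
    δ ^ (1 / θ) * (δ * r ^ θ) ^ (1 - 1 / θ) = δ * r ^ (θ - 1) := by
  rw [mul_rpow hδ.le (by positivity), ← rpow_mul hr.le, ← mul_assoc, ← rpow_add hδ,
    show 1 / θ + (1 - 1 / θ) = 1 by ring, rpow_one, show θ * (1 - 1 / θ) = θ - 1 by field_simp]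

lemma mul_div_rpow_sub_one {p q θ : ℝ} (hp : 0 < p) (hq : 0 < q) :
    p * (p / q) ^ (θ - 1) = q * (p / q) ^ θ := by
  rw [rpow_sub (by positivity), rpow_one]
  field_simp

section PowerUtility

variable {p q θ δ : ℝ}

lemma densityMoment_pos (hp0 : 0 < p) (hp1 : p < 1) (hq0 : 0 < q) (hq1 : q < 1) :
    0 < densityMoment p q θ := by
  have : 0 < 1 - q := by linarith
  have : 0 < 1 - p := by linarith
  unfold densityMoment
  positivity

lemma budget_eq_one (hm : densityMoment p q θ ≠ 0) (hδ : δ = (densityMoment p q θ)⁻¹) :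
    q * (δ * (p / q) ^ θ) + (1 - q) * (δ * ((1 - p) / (1 - q)) ^ θ) = 1 := by
  calc _ = δ * densityMoment p q θ := by rw [densityMoment]; ring
    _ = 1 := by rw [hδ, inv_mul_cancel₀ hm]

lemma expected_power_eq_one (hp0 : 0 < p) (hp1 : p < 1) (hq0 : 0 < q) (hq1 : q < 1)
    (hθ : θ ≠ 0) (hδ : δ = (densityMoment p q θ)⁻¹) :
    p * (δ ^ (1 / θ) * (δ * (p / q) ^ θ) ^ (1 - 1 / θ)) +
      (1 - p) * (δ ^ (1 / θ) * (δ * ((1 - p) / (1 - q)) ^ θ) ^ (1 - 1 / θ)) = 1 := by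
  have hm := densityMoment_pos (θ := θ) hp0 hp1 hq0 hq1
  have hδ0 : 0 < δ := hδ ▸ inv_pos.2 hm
  have h1p : 0 < 1 - p := by linarith
  have h1q : 0 < 1 - q := by linarith
  rw [rpow_inv_mul_rpow_one_sub_inv hδ0 (by positivity) hθ,
    rpow_inv_mul_rpow_one_sub_inv hδ0 (by positivity) hθ]
  calc _ = q * (δ * (p / q) ^ θ) + (1 - q) * (δ * ((1 - p) / (1 - q)) ^ θ) := by
        linear_combination δ * mul_div_rpow_sub_one (θ := θ) hp0 hq0 +
          δ * mul_div_rpow_sub_one (θ := θ) h1p h1q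
    _ = 1 := budget_eq_one hm.ne' hδ

end PowerUtility

theorem stmt19_general
    (u d p q a b c θ δ : ℝ)
    (hu : 1 < u) (hd1 : d < 1) (hp0 : 0 < p) (hp1 : p < 1)
    (hq : q = (1 - d) / (u - d)) (ha : a = ((1 - p) * q) / (p * (1 - q)))
    (hb : b = (1 - q) / q) (hc : c = (1 - p) / (1 - q))
    (hθ0 : 0 < θ)
    (hδ : δ = (1 + b) / (c ^ θ * (a ^ (-θ) + b)))
    (U₀ U₁ : ℝ → ℝ)
    (hU₀def : ∀ x > 0, U₀ x = x ^ (1 - 1 / θ) / (1 - 1 / θ))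
    (hU₁def : ∀ x > 0, U₁ x = δ ^ (1 / θ) * (x ^ (1 - 1 / θ) / (1 - 1 / θ))) :
    ∀ x > 0, ∀ πx : ℝ, πx = ((δ * (p / q) ^ θ - 1) / (u - 1)) * x →
      (-(x / (u - 1)) ≤ πx ∧ πx ≤ x / (1 - d)) ∧
      p * U₁ (x + πx * (u - 1)) + (1 - p) * U₁ (x + πx * (d - 1)) = U₀ x := by
  intro x hx πx hπ
  obtain ⟨hq0, hq1⟩ := riskNeutralProb_mem_Ioo_s19 hu hd1 hq
  have hm := densityMoment_pos (θ := θ) hp0 hp1 hq0 hq1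
  have hδm : δ = (densityMoment p q θ)⁻¹ :=
    hδ.trans (delta_eq_inv_densityMoment hp0 hp1 hq0 hq1 ha hb hc)
  have hδ0 : 0 < δ := hδm ▸ inv_pos.2 hm
  have hK : 0 < δ * (p / q) ^ θ := by positivity
  have hL : 0 < δ * ((1 - p) / (1 - q)) ^ θ :=
    mul_pos hδ0 (rpow_pos_of_pos (div_pos (sub_pos.2 hp1) (sub_pos.2 hq1)) θ)
  have hup : x + πx * (u - 1) = δ * (p / q) ^ θ * x := hπ ▸ replicating_wealth_up hu.ne'
  have hqud : q * (u - d) = 1 - d := by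
    rw [hq, div_mul_cancel₀ _ (sub_pos.2 (hd1.trans hu)).ne']
  have hdown : x + πx * (d - 1) = δ * ((1 - p) / (1 - q)) ^ θ * x :=
    hπ ▸ replicating_wealth_down hu.ne' hqud (budget_eq_one hm.ne' hδm)
  refine ⟨admissible_of_wealth_nonneg hu hd1 (hup ▸ by positivity) (hdown ▸ by positivity), ?_⟩
  rw [hup, hdown, hU₁def _ (by positivity), hU₁def _ (by positivity), hU₀def x hx,
    mul_rpow hK.le hx.le, mul_rpow hL.le hx.le]
  linear_combination (x ^ (1 - 1 / θ) / (1 - 1 / θ)) *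
    expected_power_eq_one hp0 hp1 hq0 hq1 hθ0.ne' hδm

/-- For the power initial utility `U₀(x) = x^{1−1/θ}/(1−1/θ)` and
`U₁ = δ^{1/θ}·U₀` with `δ = (1+b)/(c^θ·(a^{−θ}+b))`, the portfolio
`π*(x) = ((δ·(p/q)^θ − 1)/(u−1))·x` is admissible and attains the supremum in the
single-period inverse investment problem:
`p·U₁(x+π*(x)(u−1)) + (1−p)·U₁(x+π*(x)(d−1)) = U₀(x)`. -/
theorem stmt19
    (u d p q a b c θ δ : ℝ)
    (hu : 1 < u) (hd0 : 0 < d) (hd1 : d < 1) (hp0 : 0 < p) (hp1 : p < 1)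
    (hq : q = (1 - d) / (u - d)) (ha : a = ((1 - p) * q) / (p * (1 - q)))
    (hb : b = (1 - q) / q) (hc : c = (1 - p) / (1 - q))
    (ha1 : a ≠ 1)
    (hθ0 : 0 < θ) (hθ1 : θ ≠ 1) (hθ2 : θ ≠ -(Real.log b / Real.log a))
    (hδ : δ = (1 + b) / (c ^ θ * (a ^ (-θ) + b)))
    (U₀ U₁ : ℝ → ℝ)
    (hU₀def : ∀ x > 0, U₀ x = x ^ (1 - 1 / θ) / (1 - 1 / θ))
    (hU₁def : ∀ x > 0, U₁ x = δ ^ (1 / θ) * (x ^ (1 - 1 / θ) / (1 - 1 / θ))) :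
    ∀ x > 0, ∀ πx : ℝ, πx = ((δ * (p / q) ^ θ - 1) / (u - 1)) * x →
      (-(x / (u - 1)) ≤ πx ∧ πx ≤ x / (1 - d)) ∧
      p * U₁ (x + πx * (u - 1)) + (1 - p) * U₁ (x + πx * (d - 1)) = U₀ x :=
  stmt19_general u d p q a b c θ δ hu hd1 hp0 hp1 hq ha hb hc hθ0 hδ U₀ U₁ hU₀def hU₁def
end
end
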